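/- arXiv:1404.1856 — 4 statements merged into one kernel-verified Lean document; each statement's English description precedes it below -/
import Mathlib

section
/- If X ~ CMP(λ₁, ν) and Y ~ CMP(λ₂, ν) are independent Conway-Maxwell-Poisson random variables with the same ν, then conditionally on X + Y = m, X has the COMB(m, λ₁/(λ₁+λ₂), ν) distribution: P{X = k | X+Y = m} = pᵏ(1-p)^{m-k} C(m,k)^ν / S(p,ν) with p = λ₁/(λ₁+λ₂). -/
/-- Normalizing constant of the Conway-Maxwell-Poisson distribution. -/
noncomputable def cmpM (lam ν : ℝ) : ℝ := ∑' j : ℕ, lam ^ j / (j.factorial : ℝ) ^ ν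

/-- Conway-Maxwell-Poisson pmf. -/
noncomputable def cmpPmf (lam ν : ℝ) (x : ℕ) : ℝ :=
  lam ^ x / ((x.factorial : ℝ) ^ ν * cmpM lam ν)

noncomputable def combS (m : ℕ) (p ν : ℝ) : ℝ :=
  ∑ k ∈ Finset.range (m + 1), p ^ k * (1 - p) ^ (m - k) * (m.choose k : ℝ) ^ ν

noncomputable def combPmf (m : ℕ) (p ν : ℝ) (k : ℕ) : ℝ :=
  p ^ k * (1 - p) ^ (m - k) * (m.choose k : ℝ) ^ ν / combS m p ν

/-- Conditionally on `X + Y = m`, a CMP variable is COM-Binomial. -/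
theorem cmp_condition_on_sum_eq_comb (lam₁ lam₂ ν : ℝ)
    (h₁ : 0 < lam₁) (h₂ : 0 < lam₂)
    (hM₁ : Summable fun j : ℕ => lam₁ ^ j / (j.factorial : ℝ) ^ ν)
    (hM₂ : Summable fun j : ℕ => lam₂ ^ j / (j.factorial : ℝ) ^ ν)
    (m k : ℕ) (hk : k ≤ m) :
    cmpPmf lam₁ ν k * cmpPmf lam₂ ν (m - k) /
        (∑ j ∈ Finset.range (m + 1), cmpPmf lam₁ ν j * cmpPmf lam₂ ν (m - j))
      = combPmf m (lam₁ / (lam₁ + lam₂)) ν k := by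
  set s := lam₁ + lam₂ with hs
  have hspos : 0 < s := by positivity
  have hfac : ∀ n : ℕ, (0:ℝ) < (n.factorial : ℝ) ^ ν := fun n =>
    Real.rpow_pos_of_pos (by exact_mod_cast n.factorial_pos) ν
  have hM₁pos : 0 < cmpM lam₁ ν := by
    refine Summable.tsum_pos hM₁ (fun j => by positivity) 0 ?_
    simp [Real.one_rpow]
  have hM₂pos : 0 < cmpM lam₂ ν := by
    refine Summable.tsum_pos hM₂ (fun j => by positivity) 0 ?_
    simp [Real.one_rpow]
  set p := lam₁ / s with hp
  have h1p : 1 - p = lam₂ / s := by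
    rw [hp, eq_div_iff (ne_of_gt hspos), sub_mul, div_mul_cancel₀ _ (ne_of_gt hspos), hs]
    ring
  set c := s ^ m / ((m.factorial : ℝ) ^ ν * (cmpM lam₁ ν * cmpM lam₂ ν)) with hc
  have hcpos : 0 < c := by
    have := hfac m
    positivity
  have key : ∀ j ∈ Finset.range (m + 1),
      cmpPmf lam₁ ν j * cmpPmf lam₂ ν (m - j)
        = c * (p ^ j * (1 - p) ^ (m - j) * (m.choose j : ℝ) ^ ν) := by
    intro j hj
    have hjm : j ≤ m := Nat.lt_succ_iff.mp (Finset.mem_range.mp hj)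
    have hchoosepos : (0:ℝ) < (m.choose j : ℝ) := by
      exact_mod_cast Nat.choose_pos hjm
    have hfac_eq : ((m.factorial : ℝ)) ^ ν
        = (m.choose j : ℝ) ^ ν * ((j.factorial : ℝ) ^ ν * (((m - j).factorial : ℝ)) ^ ν) := by
      rw [← Real.mul_rpow (by positivity) (by positivity),
        ← Real.mul_rpow (le_of_lt hchoosepos) (by positivity)]
      congr 1
      exact_mod_cast congrArg Nat.cast ((mul_assoc _ _ _).symm.trans (Nat.choose_mul_factorial_mul_factorial hjm)).symm
    have hsm : s ^ m = s ^ j * s ^ (m - j) := by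
      rw [← pow_add, Nat.add_sub_cancel' hjm]
    rw [h1p, hp, hc, hfac_eq, hsm]
    unfold cmpPmf
    rw [div_pow, div_pow]
    have h0 := hfac j
    have h1 := hfac (m - j)
    have h2 := hfac m
    field_simp
  rw [Finset.sum_congr rfl key, ← Finset.mul_sum,
    key k (Finset.mem_range.mpr (Nat.lt_succ_of_le hk)),
    mul_div_mul_left _ _ (ne_of_gt hcpos)]
  rfl
end

section
/- With g(Ψ,ν) = φ(Ψ)φ(ν−1) where φ is the standard normal density, and Z(Ψ,ν) = ∑ₖ₌₀ᵐ e^{Ψk}/(k!(m-k)!)^ν, the integral K⁻¹(a,b,c) = ∫∫ g(Ψ,ν) e^{Ψa − bν} Z(Ψ,ν)^{−c} dΨ dν over ℝ² is finite for all real a, b and all c ≥ 0. -/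
open MeasureTheory

noncomputable def combZ (m : ℕ) (Ψ ν : ℝ) : ℝ :=
  ∑ k ∈ Finset.range (m + 1),
    Real.exp (Ψ * k) / ((k.factorial * (m - k).factorial : ℕ) : ℝ) ^ ν

/-- Standard normal density. -/
noncomputable def stdNormalPdf (x : ℝ) : ℝ :=
  (2 * Real.pi) ^ (-(1 : ℝ) / 2) * Real.exp (-x ^ 2 / 2)

lemma integrable_gauss_lin (r s : ℝ) :
    Integrable (fun x : ℝ => Real.exp (-(x - s) ^ 2 / 2 + r * x)) := by
  have h := (integrable_exp_neg_mul_sq (b := 1/2) (by norm_num)).comp_sub_right (s + r)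
  have h2 := h.const_mul (Real.exp (r ^ 2 / 2 + r * s))
  refine h2.congr (Filter.Eventually.of_forall fun x => ?_)
  show Real.exp (r ^ 2 / 2 + r * s) * Real.exp (-(1 / 2) * (x - (s + r)) ^ 2)
      = Real.exp (-(x - s) ^ 2 / 2 + r * x)
  rw [← Real.exp_add]
  congr 1
  ring

lemma combZ_pos (m : ℕ) (Ψ ν : ℝ) : 0 < combZ m Ψ ν := by
  unfold combZ
  apply Finset.sum_pos
  · intro k _
    exact div_pos (Real.exp_pos _) (Real.rpow_pos_of_pos (by positivity) _)
  · exact ⟨0, Finset.mem_range.2 (Nat.succ_pos m)⟩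

lemma combZ_lower (m : ℕ) (Ψ ν : ℝ) :
    ((m.factorial : ℝ)) ^ (-ν) ≤ combZ m Ψ ν := by
  have h0 : (0 : ℕ) ∈ Finset.range (m + 1) := Finset.mem_range.2 (Nat.succ_pos m)
  have hle := Finset.single_le_sum (f := fun k : ℕ =>
      Real.exp (Ψ * k) / ((k.factorial * (m - k).factorial : ℕ) : ℝ) ^ ν)
    (fun k _ => le_of_lt (div_pos (Real.exp_pos _) (Real.rpow_pos_of_pos (by positivity) _))) h0
  calc ((m.factorial : ℝ)) ^ (-ν)
      = Real.exp (Ψ * ((0 : ℕ) : ℝ)) /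
        ((Nat.factorial 0 * (m - 0).factorial : ℕ) : ℝ) ^ ν := by
        simp [Real.rpow_neg (Nat.cast_nonneg _), div_eq_mul_inv]
    _ ≤ combZ m Ψ ν := hle

lemma combZ_continuous (m : ℕ) : Continuous fun q : ℝ × ℝ => combZ m q.1 q.2 := by
  unfold combZ
  apply continuous_finset_sum
  intro k _
  have hb : (0 : ℝ) < ((k.factorial * (m - k).factorial : ℕ) : ℝ) := by positivity
  have hden : Continuous fun q : ℝ × ℝ =>
      ((k.factorial * (m - k).factorial : ℕ) : ℝ) ^ q.2 := by
    have heq : ∀ q : ℝ × ℝ, ((k.factorial * (m - k).factorial : ℕ) : ℝ) ^ q.2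
        = Real.exp (q.2 * Real.log ((k.factorial * (m - k).factorial : ℕ) : ℝ)) := by
      intro q; rw [Real.rpow_def_of_pos hb, mul_comm]
    simp only [heq]
    exact Real.continuous_exp.comp (continuous_snd.mul continuous_const)
  exact (Real.continuous_exp.comp (continuous_fst.mul continuous_const)).div hden
    (fun q => ne_of_gt (Real.rpow_pos_of_pos hb _))

/-- The conjugate prior's normalizing integral `K⁻¹(a,b,c)` is finite. -/
theorem conjugate_prior_normalizing_constant_finite
    (m : ℕ) (hm : 0 < m) (a b c : ℝ) (hc : 0 ≤ c) :
    Integrable (fun q : ℝ × ℝ =>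
      stdNormalPdf q.1 * stdNormalPdf (q.2 - 1) *
        Real.exp (q.1 * a - b * q.2) * (combZ m q.1 q.2) ^ (-c))
      (volume : Measure (ℝ × ℝ)) := by
  set C : ℝ := (2 * Real.pi) ^ (-(1 : ℝ) / 2) with hC
  have hCpos : 0 < C := Real.rpow_pos_of_pos (by positivity) _
  set L : ℝ := Real.log (m.factorial : ℝ) with hL
  have hfac : (0 : ℝ) < (m.factorial : ℝ) := by positivity
  -- dominating function
  have hg1 : Integrable (fun x : ℝ => C * Real.exp (-(x - 0) ^ 2 / 2 + a * x)) :=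
    (integrable_gauss_lin a 0).const_mul C
  have hg2 : Integrable (fun y : ℝ => C * Real.exp (-(y - 1) ^ 2 / 2 + (c * L - b) * y)) :=
    (integrable_gauss_lin (c * L - b) 1).const_mul C
  have hgint : Integrable (fun q : ℝ × ℝ =>
      (C * Real.exp (-(q.1 - 0) ^ 2 / 2 + a * q.1)) *
      (C * Real.exp (-(q.2 - 1) ^ 2 / 2 + (c * L - b) * q.2)))
      (volume : Measure (ℝ × ℝ)) := by
    rw [Measure.volume_eq_prod]
    exact hg1.mul_prod hg2
  -- measurability of the integrand (it is continuous)
  have hZcont := combZ_continuous m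
  have hmeas : AEStronglyMeasurable (fun q : ℝ × ℝ =>
      stdNormalPdf q.1 * stdNormalPdf (q.2 - 1) *
        Real.exp (q.1 * a - b * q.2) * (combZ m q.1 q.2) ^ (-c))
      (volume : Measure (ℝ × ℝ)) := by
    apply Continuous.aestronglyMeasurable
    apply Continuous.mul
    · apply Continuous.mul
      · unfold stdNormalPdf
        exact (continuous_const.mul
            (Real.continuous_exp.comp (((continuous_fst.pow 2).neg).div_const 2))).mul
          (continuous_const.mul (Real.continuous_exp.comp
            ((((continuous_snd.sub continuous_const).pow 2).neg).div_const 2)))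
      · exact Real.continuous_exp.comp
          ((continuous_fst.mul continuous_const).sub (continuous_const.mul continuous_snd))
    · exact hZcont.rpow_const (fun q => Or.inl (ne_of_gt (combZ_pos m q.1 q.2)))
  refine Integrable.mono' hgint hmeas (Filter.Eventually.of_forall fun q => ?_)
  obtain ⟨x, y⟩ := q
  simp only [Real.norm_eq_abs]
  have hZ := combZ_pos m x y
  have hnn : 0 ≤ stdNormalPdf x * stdNormalPdf (y - 1) *
      Real.exp (x * a - b * y) * (combZ m x y) ^ (-c) := by
    unfold stdNormalPdf
    have := Real.rpow_nonneg hZ.le (-c)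
    positivity
  rw [abs_of_nonneg hnn]
  have hZc : (combZ m x y) ^ (-c) ≤ Real.exp (c * L * y) := by
    have h1 : ((m.factorial : ℝ)) ^ (-y) ≤ combZ m x y := combZ_lower m x y
    calc (combZ m x y) ^ (-c) ≤ (((m.factorial : ℝ)) ^ (-y)) ^ (-c) :=
          Real.rpow_le_rpow_of_nonpos (Real.rpow_pos_of_pos hfac _) h1 (neg_nonpos.2 hc)
      _ = ((m.factorial : ℝ)) ^ (y * c) := by
          rw [← Real.rpow_mul (Nat.cast_nonneg _), neg_mul_neg]
      _ = Real.exp (c * L * y) := by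
          rw [Real.rpow_def_of_pos hfac, hL]; ring_nf
  calc stdNormalPdf x * stdNormalPdf (y - 1) * Real.exp (x * a - b * y) * (combZ m x y) ^ (-c)
      ≤ stdNormalPdf x * stdNormalPdf (y - 1) * Real.exp (x * a - b * y) *
        Real.exp (c * L * y) := by
        apply mul_le_mul_of_nonneg_left hZc
        unfold stdNormalPdf
        positivity
    _ = (C * Real.exp (-(x - 0) ^ 2 / 2 + a * x)) *
        (C * Real.exp (-(y - 1) ^ 2 / 2 + (c * L - b) * y)) := by
        have h1 : stdNormalPdf x * stdNormalPdf (y - 1) * Real.exp (x * a - b * y) *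
            Real.exp (c * L * y)
            = C * C * Real.exp ((-x ^ 2 / 2) + (-(y - 1) ^ 2 / 2) + (x * a - b * y) + c * L * y)
            := by
          simp only [stdNormalPdf, ← hC, Real.exp_add]; ring
        have h2 : (C * Real.exp (-(x - 0) ^ 2 / 2 + a * x)) *
            (C * Real.exp (-(y - 1) ^ 2 / 2 + (c * L - b) * y))
            = C * C * Real.exp ((-(x - 0) ^ 2 / 2 + a * x) +
              (-(y - 1) ^ 2 / 2 + (c * L - b) * y)) := by
          simp only [Real.exp_add]; ring
        rw [h1, h2]
        congr 1
        ring
end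

section
/- The set of exchangeable probability distributions on {0,1}ᵐ is convex, and its extreme points are exactly e₀,…,eₘ, where e_ℓ puts probability 1/C(m,ℓ) on each binary sequence with exactly ℓ ones and 0 elsewhere. Moreover, every exchangeable distribution has a unique representation as a convex combination of e₀,…,eₘ. -/
def onesCount {m : ℕ} (x : Fin m → Bool) : ℕ :=
  (Finset.univ.filter (fun i => x i = true)).card

/-- The set of exchangeable probability distributions on `{0,1}^m`. -/
def exchangeableDists (m : ℕ) : Set ((Fin m → Bool) → ℝ) :=
  {P | (∀ x, 0 ≤ P x) ∧ (∑ x : Fin m → Bool, P x = 1) ∧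
       (∀ (π : Equiv.Perm (Fin m)) (x : Fin m → Bool), P (x ∘ π) = P x)}

/-- `eExtreme m ℓ` puts mass `1 / C(m,ℓ)` on each sequence with exactly `ℓ` ones. -/
noncomputable def eExtreme (m : ℕ) (ℓ : Fin (m + 1)) : (Fin m → Bool) → ℝ :=
  fun x => if onesCount x = (ℓ : ℕ) then 1 / (m.choose ℓ : ℝ) else 0

/-!
A permutation can move any sequence with `ℓ` ones to any other, so an exchangeable `P` is
constant on each class `S(ℓ,m)` and is determined by the masses `w ℓ = P(S(ℓ,m))`; explicitly
`P = ∑ ℓ, w ℓ • e_ℓ`. Hence `w ↦ ∑ ℓ, w ℓ • e_ℓ` is an injective linear map (the class masses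
invert it) carrying the standard simplex onto the exchangeable distributions. Injective linear
maps preserve extreme points, and those of the simplex are its vertices, which go to the `e_ℓ`.
-/

section Convex

variable {𝕜 E F ι : Type*}

open Set in
theorem LinearMap.image_extremePoints_of_injective [Ring 𝕜] [PartialOrder 𝕜] [IsOrderedRing 𝕜]
    [AddCommGroup E] [Module 𝕜 E] [AddCommGroup F] [Module 𝕜 F]
    (f : E →ₗ[𝕜] F) (hf : Function.Injective f) (s : Set E) :
    f '' extremePoints 𝕜 s = extremePoints 𝕜 (f '' s) := by
  have hseg : ∀ x y, f '' openSegment 𝕜 x y = openSegment 𝕜 (f x) (f y) :=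
    image_openSegment _ f.toAffineMap
  have key : ∀ x, f x ∈ extremePoints 𝕜 (f '' s) ↔ x ∈ extremePoints 𝕜 s := fun x ↦ by
    simp only [mem_extremePoints_iff_left, forall_mem_image, hf.mem_set_image, hf.eq_iff, ← hseg]
  refine Subset.antisymm (image_subset_iff.2 fun x hx ↦ (key x).2 hx) fun y hy ↦ ?_
  obtain ⟨x, -, rfl⟩ := hy.1
  exact mem_image_of_mem f ((key x).1 hy)

open Set in
theorem extremePoints_stdSimplex [Field 𝕜] [LinearOrder 𝕜] [IsStrictOrderedRing 𝕜]
    [Fintype ι] [DecidableEq ι] :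
    extremePoints 𝕜 (stdSimplex 𝕜 ι) = range fun i ↦ Pi.single i 1 := by
  refine Subset.antisymm ?_ ?_
  · rw [← convexHull_rangle_single_eq_stdSimplex]
    exact extremePoints_convexHull_subset
  rintro _ ⟨i, rfl⟩
  refine ⟨single_mem_stdSimplex 𝕜 i, fun x₁ hx₁ x₂ hx₂ ⟨a, b, ha, hb, _, h⟩ ↦ ?_⟩
  have hzero : ∀ j ≠ i, x₁ j = 0 := fun j hj ↦ by
    have hj' : a * x₁ j + b * x₂ j = 0 := by simpa [hj] using congr_fun h j
    have := (add_eq_zero_iff_of_nonneg (mul_nonneg ha.le (hx₁.1 j))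
      (mul_nonneg hb.le (hx₂.1 j))).1 hj'
    exact (mul_eq_zero.1 this.1).resolve_left ha.ne'
  have hone : x₁ i = 1 := by
    rw [← hx₁.2, Finset.sum_eq_single i (fun j _ ↦ hzero j) (by simp)]
  ext j
  obtain rfl | hj := eq_or_ne j i
  · simp [hone]
  · simp [hzero j hj, hj]

end Convex

theorem exists_perm_comp_eq_of_card_fiber_eq {α β : Type*} [Fintype α] [DecidableEq β]
    {f g : α → β} (h : ∀ b, Fintype.card {a // f a = b} = Fintype.card {a // g a = b}) :
    ∃ σ : Equiv.Perm α, g ∘ σ = f :=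
  ⟨Equiv.ofFiberEquiv fun b ↦ Fintype.equivOfCardEq (h b), funext (Equiv.ofFiberEquiv_map _)⟩

open Finset

section Exchangeable

variable {m : ℕ}

lemma onesCount_le (x : Fin m → Bool) : onesCount x ≤ m :=
  (card_filter_le _ _).trans_eq (card_fin m)

lemma onesCount_comp_perm (x : Fin m → Bool) (π : Equiv.Perm (Fin m)) :
    onesCount (x ∘ π) = onesCount x :=
  card_equiv π (by simp)

lemma card_filter_onesCount_eq (m k : ℕ) :
    #{x : Fin m → Bool | onesCount x = k} = m.choose k := by
  calc _ = #(powersetCard k (univ : Finset (Fin m))) := by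
        refine card_nbij' (fun x ↦ ({i | x i = true} : Finset (Fin m)))
          (fun s i ↦ decide (i ∈ s)) ?_ ?_ ?_ ?_
        · intro x hx
          simp only [mem_coe, mem_filter, mem_powersetCard] at hx ⊢
          exact ⟨subset_univ _, hx.2⟩
        · intro s hs
          simp only [mem_coe, mem_filter, mem_powersetCard] at hs ⊢
          simpa [onesCount] using hs.2
        · intro x _; funext i; simp
        · intro s _; ext i; simp
    _ = m.choose k := by simp

lemma card_subtype_apply_eq_false (x : Fin m → Bool) :
    Fintype.card {i // x i = false} = m - onesCount x := by
  simp_rw [← Bool.not_eq_true]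
  rw [Fintype.card_subtype_compl, Fintype.card_fin, Fintype.card_subtype]
  rfl

lemma exists_perm_comp_eq_of_onesCount_eq {x y : Fin m → Bool}
    (h : onesCount x = onesCount y) : ∃ π : Equiv.Perm (Fin m), x ∘ π = y := by
  refine exists_perm_comp_eq_of_card_fiber_eq fun b ↦ ?_
  cases b
  · rw [card_subtype_apply_eq_false, card_subtype_apply_eq_false, h]
  · simp only [Fintype.card_subtype]; exact h.symm

def onesClass (x : Fin m → Bool) : Fin (m + 1) :=
  ⟨onesCount x, Nat.lt_succ_of_le (onesCount_le x)⟩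

lemma onesClass_eq_iff {x : Fin m → Bool} {ℓ : Fin (m + 1)} :
    onesClass x = ℓ ↔ onesCount x = ℓ :=
  Fin.ext_iff

lemma card_filter_onesClass_eq (ℓ : Fin (m + 1)) :
    #{x : Fin m → Bool | onesClass x = ℓ} = m.choose ℓ := by
  simp only [onesClass_eq_iff, card_filter_onesCount_eq]

lemma cast_choose_ne_zero (ℓ : Fin (m + 1)) : (m.choose ℓ : ℝ) ≠ 0 :=
  Nat.cast_ne_zero.2 (Nat.choose_pos (Nat.lt_succ_iff.1 ℓ.isLt)).ne'

lemma eExtreme_apply (ℓ : Fin (m + 1)) (x : Fin m → Bool) :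
    eExtreme m ℓ x = if onesClass x = ℓ then (m.choose ℓ : ℝ)⁻¹ else 0 := by
  simp only [eExtreme, onesClass_eq_iff, one_div]

variable (m) in
noncomputable def fiberMass : ((Fin m → Bool) → ℝ) →ₗ[ℝ] (Fin (m + 1) → ℝ) :=
  FunOnFinite.linearMap ℝ ℝ onesClass

lemma fiberMass_apply (P : (Fin m → Bool) → ℝ) (ℓ : Fin (m + 1)) :
    fiberMass m P ℓ = ∑ x with onesClass x = ℓ, P x :=
  FunOnFinite.linearMap_apply_apply _ _ _ _ _

lemma sum_fiberMass (P : (Fin m → Bool) → ℝ) : ∑ ℓ, fiberMass m P ℓ = ∑ x, P x := by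
  simp only [fiberMass_apply, sum_fiberwise]

variable (m) in
noncomputable def mixture : (Fin (m + 1) → ℝ) →ₗ[ℝ] ((Fin m → Bool) → ℝ) :=
  Fintype.linearCombination ℝ (eExtreme m)

lemma mixture_apply (w : Fin (m + 1) → ℝ) : mixture m w = ∑ ℓ, w ℓ • eExtreme m ℓ :=
  Fintype.linearCombination_apply _ _ _

lemma mixture_single (ℓ : Fin (m + 1)) : mixture m (Pi.single ℓ 1) = eExtreme m ℓ := by
  rw [mixture, Fintype.linearCombination_apply_single, one_smul]

lemma fiberMass_eExtreme (k : Fin (m + 1)) : fiberMass m (eExtreme m k) = Pi.single k 1 := by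
  ext ℓ
  rw [fiberMass_apply, sum_congr rfl fun x hx ↦ by rw [eExtreme_apply, (mem_filter.1 hx).2],
    sum_const, card_filter_onesClass_eq, nsmul_eq_mul]
  obtain rfl | h := eq_or_ne ℓ k
  · simpa using mul_inv_cancel₀ (cast_choose_ne_zero ℓ)
  · simp [h]

lemma fiberMass_mixture (w : Fin (m + 1) → ℝ) : fiberMass m (mixture m w) = w := by
  ext ℓ
  simp [mixture_apply, fiberMass_eExtreme, Pi.single_apply]

lemma mixture_injective : Function.Injective (mixture m) :=
  Function.LeftInverse.injective fiberMass_mixture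

lemma apply_eq_of_onesCount_eq {P : (Fin m → Bool) → ℝ}
    (hP : ∀ (π : Equiv.Perm (Fin m)) x, P (x ∘ π) = P x) {x y : Fin m → Bool}
    (h : onesCount x = onesCount y) : P x = P y := by
  obtain ⟨π, rfl⟩ := exists_perm_comp_eq_of_onesCount_eq h
  exact (hP π x).symm

lemma mixture_fiberMass {P : (Fin m → Bool) → ℝ}
    (hP : ∀ (π : Equiv.Perm (Fin m)) x, P (x ∘ π) = P x) : mixture m (fiberMass m P) = P := by
  ext x
  have hfiber : fiberMass m P (onesClass x) = m.choose (onesClass x) * P x := by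
    rw [fiberMass_apply, sum_congr rfl fun y hy ↦ apply_eq_of_onesCount_eq hP
      (congrArg Fin.val (mem_filter.1 hy).2), sum_const, card_filter_onesClass_eq, nsmul_eq_mul]
  simp only [mixture_apply, Finset.sum_apply, Pi.smul_apply, smul_eq_mul,
    eExtreme_apply, mul_ite, mul_zero, Finset.sum_ite_eq, Finset.mem_univ, if_true, hfiber]
  rw [mul_right_comm, mul_inv_cancel₀ (cast_choose_ne_zero _), one_mul]

lemma eExtreme_mem_exchangeableDists (ℓ : Fin (m + 1)) : eExtreme m ℓ ∈ exchangeableDists m := by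
  refine ⟨fun x ↦ ?_, ?_, fun π x ↦ by simp only [eExtreme, onesCount_comp_perm]⟩
  · unfold eExtreme; split_ifs <;> positivity
  · rw [← sum_fiberMass, fiberMass_eExtreme]
    simp

lemma convex_exchangeableDists : Convex ℝ (exchangeableDists m) := by
  rintro P ⟨hP₀, hP₁, hPπ⟩ Q ⟨hQ₀, hQ₁, hQπ⟩ a b ha hb hab
  refine ⟨fun x ↦ ?_, ?_, fun π x ↦ ?_⟩
  · simp only [Pi.add_apply, Pi.smul_apply, smul_eq_mul]
    exact add_nonneg (mul_nonneg ha (hP₀ x)) (mul_nonneg hb (hQ₀ x))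
  · simp only [Pi.add_apply, Pi.smul_apply, smul_eq_mul, sum_add_distrib, ← mul_sum, hP₁, hQ₁,
      mul_one, hab]
  · simp only [Pi.add_apply, Pi.smul_apply, hPπ, hQπ]

lemma exchangeableDists_eq_image_mixture :
    exchangeableDists m = mixture m '' stdSimplex ℝ (Fin (m + 1)) := by
  refine Set.Subset.antisymm (fun P hP ↦ ⟨fiberMass m P, ?_, mixture_fiberMass hP.2.2⟩) ?_
  · exact stdSimplex.image_linearMap onesClass ⟨P, ⟨hP.1, hP.2.1⟩, rfl⟩
  · rintro _ ⟨w, hw, rfl⟩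
    rw [mixture_apply]
    exact convex_exchangeableDists.sum_mem (fun ℓ _ ↦ hw.1 ℓ) hw.2
      fun ℓ _ ↦ eExtreme_mem_exchangeableDists ℓ

end Exchangeable

theorem exchangeable_convex_extreme_points_unique_mixture (m : ℕ) :
    Convex ℝ (exchangeableDists m) ∧
    Set.extremePoints ℝ (exchangeableDists m) = Set.range (eExtreme m) ∧
    ∀ P ∈ exchangeableDists m,
      ∃! w : Fin (m + 1) → ℝ,
        (∀ ℓ, 0 ≤ w ℓ) ∧ (∑ ℓ, w ℓ = 1) ∧
        P = ∑ ℓ, w ℓ • eExtreme m ℓ := by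
  refine ⟨convex_exchangeableDists, ?_, fun P hP ↦ ?_⟩
  · rw [exchangeableDists_eq_image_mixture,
      ← (mixture m).image_extremePoints_of_injective mixture_injective, extremePoints_stdSimplex,
      ← Set.range_comp]
    simp only [Function.comp_def, mixture_single]
  · rw [exchangeableDists_eq_image_mixture] at hP
    obtain ⟨w, hw, rfl⟩ := hP
    refine ⟨w, ⟨hw.1, hw.2, mixture_apply w⟩, fun v hv ↦ mixture_injective ?_⟩
    rw [mixture_apply, ← hv.2.2]
end

section
/- If X₁,…,X_r are independent with Xᵢ ~ CMP(λᵢ, ν), then conditional on ∑ᵢ Xᵢ = m, the vector (X₁,…,X_r) has the COMM distribution with parameters pᵢ = λᵢ/λ (λ = ∑λᵢ) and ν: P{X = k | ∑Xᵢ = m} = C(m; k₁,…,k_r)^ν ∏ᵢ pᵢ^{kᵢ} / G(p,ν), where G(p,ν) = ∑_{j∈D} C(m; j₁,…,j_r)^ν ∏ᵢ pᵢ^{jᵢ} and D = {j ∈ ℤ₊^r : ∑jᵢ = m}. -/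
/-- COMM normalizing constant `G(p, ν)`; the sum ranges over
`D = {j : Fin r → ℕ | ∑ j i = m}`. -/
noncomputable def commG (r m : ℕ) (p : Fin r → ℝ) (ν : ℝ) : ℝ :=
  ∑ j ∈ Finset.Nat.antidiagonalTuple r m,
    (Nat.multinomial Finset.univ j : ℝ) ^ ν * ∏ i, p i ^ j i

/-- COMM pmf. -/
noncomputable def commPmf (r m : ℕ) (p : Fin r → ℝ) (ν : ℝ) (k : Fin r → ℕ) : ℝ :=
  (Nat.multinomial Finset.univ k : ℝ) ^ ν * (∏ i, p i ^ k i) / commG r m p ν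

/-- Independent CMP variables conditioned on their sum are COMM. -/
theorem cmp_condition_on_sum_eq_comm (r m : ℕ) (hr : 0 < r)
    (lam : Fin r → ℝ) (ν : ℝ) (hlam : ∀ i, 0 < lam i)
    (hM : ∀ i, Summable fun j : ℕ => lam i ^ j / (j.factorial : ℝ) ^ ν)
    (k : Fin r → ℕ) (hk : ∑ i, k i = m) :
    (∏ i, cmpPmf (lam i) ν (k i)) /
        (∑ j ∈ Finset.Nat.antidiagonalTuple r m, ∏ i, cmpPmf (lam i) ν (j i))
      = commPmf r m (fun i => lam i / ∑ i', lam i') ν k := by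
  have hM0 : ∀ i, 0 < cmpM (lam i) ν := fun i =>
    Summable.tsum_pos (hM i) (fun j => by have := hlam i; positivity) 0 (by have := hlam i; positivity)
  set A : (Fin r → ℕ) → ℝ :=
    fun j => (Nat.multinomial Finset.univ j : ℝ) ^ ν * ∏ i, lam i ^ j i with hA
  have hMprod : 0 < ∏ i, cmpM (lam i) ν := Finset.prod_pos fun i _ => hM0 i
  have key : ∀ j : Fin r → ℕ, ∑ i, j i = m →
      ∏ i, cmpPmf (lam i) ν (j i) =
        A j * (((m.factorial : ℝ) ^ ν * ∏ i, cmpM (lam i) ν))⁻¹ := by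
    intro j hj
    have h1 : (∏ i, ((j i).factorial : ℝ)) * (Nat.multinomial Finset.univ j : ℝ)
        = (m.factorial : ℝ) := by
      rw [← hj]
      exact_mod_cast Nat.multinomial_spec (s := Finset.univ) (f := j)
    have h2 : ∏ i, ((j i).factorial : ℝ) ^ ν
        = (∏ i, ((j i).factorial : ℝ)) ^ ν :=
      Real.finset_prod_rpow _ _ (fun i _ => by positivity) ν
    have h3 : (∏ i, ((j i).factorial : ℝ)) ^ ν * (Nat.multinomial Finset.univ j : ℝ) ^ ν
        = (m.factorial : ℝ) ^ ν := by
      rw [← Real.mul_rpow (by positivity) (by positivity), h1]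
    have hC : (0:ℝ) < (Nat.multinomial Finset.univ j : ℝ) := by
      exact_mod_cast Nat.multinomial_pos Finset.univ j
    have hF : (0:ℝ) < ∏ i, ((j i).factorial : ℝ) :=
      Finset.prod_pos fun i _ => by positivity
    simp only [cmpPmf, Finset.prod_div_distrib, Finset.prod_mul_distrib, h2, hA]
    rw [← h3]
    field_simp
  set c : ℝ := ((m.factorial : ℝ) ^ ν * ∏ i, cmpM (lam i) ν)⁻¹ with hc
  have hcne : c ≠ 0 := by
    rw [hc]
    positivity
  have hnum := key k hk
  have hden : (∑ j ∈ Finset.Nat.antidiagonalTuple r m, ∏ i, cmpPmf (lam i) ν (j i))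
      = (∑ j ∈ Finset.Nat.antidiagonalTuple r m, A j) * c := by
    rw [Finset.sum_mul]
    exact Finset.sum_congr rfl fun j hj =>
      key j (Finset.Nat.mem_antidiagonalTuple.mp hj)
  rw [hnum, hden, mul_div_mul_right _ _ hcne]
  -- RHS
  have : Nonempty (Fin r) := ⟨⟨0, hr⟩⟩
  have hL : (0:ℝ) < ∑ i', lam i' := Finset.sum_pos (fun i _ => hlam i) Finset.univ_nonempty
  have hLm : ((∑ i', lam i') ^ m : ℝ)⁻¹ ≠ 0 := by positivity
  have hprod : ∀ j : Fin r → ℕ, ∑ i, j i = m →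
      ∏ i, (lam i / ∑ i', lam i') ^ j i
        = (∏ i, lam i ^ j i) * ((∑ i', lam i') ^ m)⁻¹ := by
    intro j hj
    simp only [div_pow]
    rw [Finset.prod_div_distrib, Finset.prod_pow_eq_pow_sum, hj, div_eq_mul_inv]
  have hG : commG r m (fun i => lam i / ∑ i', lam i') ν
      = (∑ j ∈ Finset.Nat.antidiagonalTuple r m, A j) * ((∑ i', lam i') ^ m)⁻¹ := by
    rw [commG, Finset.sum_mul]
    refine Finset.sum_congr rfl fun j hj => ?_
    rw [hprod j (Finset.Nat.mem_antidiagonalTuple.mp hj), hA, mul_assoc]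
  rw [commPmf, hG, hprod k hk, ← mul_assoc, ← hA, mul_div_mul_right _ _ hLm]
end
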